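/- Let m be an extreme point of the set C of coherent distributions. Then the representation of m is unique: if (μ₁,ν₁) and (μ₂,ν₂) both belong to R(m), then μ₁ = μ₂ and ν₁ = ν₂. -/

import Mathlib

/-!
If `(μ, ν) ∈ R`, the identity `∫_A (1 - x) dμˣ = ∫_A x dνˣ` says `μˣ(A) = ∫_A x d(μ + ν)ˣ`, so
the marginals of `μ` are determined by `μ + ν`. Hence if `(μ₁, ν₁)` and `(μ₂, ν₂)` both represent
`m`, then `μ₂` has the marginals of `μ₁`, and `(μ₂, ν₁)`, `(μ₁, ν₂)` are again in `R`. Every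
`(μ, ν) ∈ R` with `μ + ν` a probability measure is coherent: draw a point from `μ + ν` and let `Z`
be the indicator that it was drawn from `μ`. Thus `m = ½ (μ₂ + ν₁) + ½ (μ₁ + ν₂)` is a midpoint of
coherent measures, and extremality gives `μ₂ + ν₁ = m = μ₁ + ν₁`.
-/

open MeasureTheory Set

/-- A probability measure on `ℝ × ℝ` (supported on `[0,1]²`) is *coherent* if it is the
joint law of `(X, Y)` with `X = 𝔼(Z|X)`, `Y = 𝔼(Z|Y)` a.s. for some `Z` in `[0,1]`. -/
def IsCoherent (m : Measure (ℝ × ℝ)) : Prop :=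
  ∃ (Ω : Type) (_mΩ : MeasurableSpace Ω) (P : Measure Ω) (_ : IsProbabilityMeasure P)
    (X Y Z : Ω → ℝ),
      Measurable X ∧ Measurable Y ∧ Measurable Z ∧
      (∀ ω, Z ω ∈ Set.Icc (0 : ℝ) 1) ∧
      Measure.map (fun ω => (X ω, Y ω)) P = m ∧
      X =ᵐ[P] P[Z | MeasurableSpace.comap X (borel ℝ)] ∧
      Y =ᵐ[P] P[Z | MeasurableSpace.comap Y (borel ℝ)]

/-- The pair `(μ, ν)` belongs to the class `R`. -/
def MemR (μ ν : Measure (ℝ × ℝ)) : Prop :=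
  ∀ A : Set ℝ, MeasurableSet A →
    (∫ x in A, (1 - x) ∂(μ.map Prod.fst) = ∫ x in A, x ∂(ν.map Prod.fst)) ∧
    (∫ y in A, (1 - y) ∂(μ.map Prod.snd) = ∫ y in A, y ∂(ν.map Prod.snd))

open scoped NNReal ENNReal

lemma MeasureTheory.Measure.eq_of_add_right_eq_add_right {α : Type*} [MeasurableSpace α]
    {μ μ' ν : Measure α} [IsFiniteMeasure ν] (h : μ + ν = μ' + ν) : μ = μ' := by
  ext s hs
  simpa [ENNReal.add_left_inj (measure_ne_top ν s)] using congrArg (· s) h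

lemma MeasureTheory.Measure.eq_of_add_left_eq_add_left {α : Type*} [MeasurableSpace α]
    {μ ν ν' : Measure α} [IsFiniteMeasure μ] (h : μ + ν = μ + ν') : ν = ν' :=
  eq_of_add_right_eq_add_right (ν := μ) (by rwa [add_comm ν, add_comm ν'])

lemma measureReal_eq_setIntegral_of_setIntegral_one_sub_eq {ρ σ : Measure ℝ} [IsFiniteMeasure ρ]
    (hint : Integrable (fun x : ℝ => x) (ρ + σ))
    (h : ∀ A, MeasurableSet A → ∫ x in A, (1 - x) ∂ρ = ∫ x in A, x ∂σ)
    {A : Set ℝ} (hA : MeasurableSet A) :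
    ρ.real A = ∫ x in A, x ∂(ρ + σ) := by
  have hρ : Integrable (fun x : ℝ => x) ρ := hint.mono_measure (Measure.le_add_right le_rfl)
  have hσ : Integrable (fun x : ℝ => x) σ := hint.mono_measure (Measure.le_add_left le_rfl)
  rw [Measure.restrict_add, integral_add_measure hρ.integrableOn hσ.integrableOn, ← h A hA,
    integral_sub (integrable_const 1) hρ.integrableOn, setIntegral_const, smul_eq_mul, mul_one]
  ring

lemma eq_of_setIntegral_one_sub_eq {ρ₁ σ₁ ρ₂ σ₂ : Measure ℝ} [IsFiniteMeasure ρ₁]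
    [IsFiniteMeasure ρ₂] (hsum : ρ₁ + σ₁ = ρ₂ + σ₂) (hint : Integrable (fun x : ℝ => x) (ρ₁ + σ₁))
    (h₁ : ∀ A, MeasurableSet A → ∫ x in A, (1 - x) ∂ρ₁ = ∫ x in A, x ∂σ₁)
    (h₂ : ∀ A, MeasurableSet A → ∫ x in A, (1 - x) ∂ρ₂ = ∫ x in A, x ∂σ₂) : ρ₁ = ρ₂ := by
  ext A hA
  rw [← measureReal_eq_measureReal_iff,
    measureReal_eq_setIntegral_of_setIntegral_one_sub_eq hint h₁ hA, hsum,
    measureReal_eq_setIntegral_of_setIntegral_one_sub_eq (hsum ▸ hint) h₂ hA]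

lemma ae_eq_condExp_comap_of_setIntegral_eq {Ω : Type*} [MeasurableSpace Ω] {P : Measure Ω}
    [IsFiniteMeasure P] {W Z : Ω → ℝ} (hW : Measurable W) (hWi : Integrable W P)
    (hZi : Integrable Z P)
    (h : ∀ A, MeasurableSet A → ∫ ω in W ⁻¹' A, W ω ∂P = ∫ ω in W ⁻¹' A, Z ω ∂P) :
    W =ᵐ[P] P[Z | MeasurableSpace.comap W (borel ℝ)] := by
  refine ae_eq_condExp_of_forall_setIntegral_eq hW.comap_le hZi (fun _ _ _ => hWi.integrableOn)
    (fun s hs _ => ?_) (comap_measurable W).aestronglyMeasurable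
  obtain ⟨A, hA, rfl⟩ := hs
  exact h A hA

section TaggedSum

variable {α : Type*}

def tagIndicator (ω : α × Bool) : ℝ := if ω.2 then 1 else 0

lemma tagIndicator_mem_Icc (ω : α × Bool) : tagIndicator ω ∈ Icc 0 1 := by
  unfold tagIndicator; split_ifs <;> simp

variable [MeasurableSpace α] (μ ν : Measure α)

/-- The measure `μ + ν` with each point tagged by the summand it is drawn from. -/
noncomputable def taggedSum : Measure (α × Bool) := μ.map (·, true) + ν.map (·, false)

lemma measurable_tagIndicator : Measurable (tagIndicator (α := α)) :=
  (measurable_from_top (f := fun b : Bool => if b then (1 : ℝ) else 0)).comp measurable_snd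

lemma map_fst_taggedSum : (taggedSum μ ν).map Prod.fst = μ + ν := by
  rw [taggedSum, Measure.map_add _ _ measurable_fst,
    Measure.map_map measurable_fst measurable_prodMk_right,
    Measure.map_map measurable_fst measurable_prodMk_right]
  exact congrArg₂ (· + ·) Measure.map_id Measure.map_id

variable [IsFiniteMeasure μ] [IsFiniteMeasure ν]

instance : IsFiniteMeasure (taggedSum μ ν) := by
  unfold taggedSum; infer_instance

lemma integrable_tagIndicator : Integrable tagIndicator (taggedSum μ ν) :=
  Integrable.of_mem_Icc 0 1 measurable_tagIndicator.aemeasurable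
    (ae_of_all _ tagIndicator_mem_Icc)

lemma setIntegral_tagIndicator_taggedSum {s : Set (α × Bool)} (hs : MeasurableSet s) :
    ∫ ω in s, tagIndicator ω ∂(taggedSum μ ν) = μ.real ((·, true) ⁻¹' s) := by
  have hint := integrable_tagIndicator μ ν
  rw [taggedSum, Measure.restrict_add, integral_add_measure
      (hint.mono_measure (Measure.le_add_right le_rfl)).integrableOn
      (hint.mono_measure (Measure.le_add_left le_rfl)).integrableOn,
    setIntegral_map hs measurable_tagIndicator.aestronglyMeasurable
      measurable_prodMk_right.aemeasurable,
    setIntegral_map hs measurable_tagIndicator.aestronglyMeasurable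
      measurable_prodMk_right.aemeasurable]
  simp [tagIndicator]

lemma ae_eq_condExp_tagIndicator {π : α → ℝ} (hπ : Measurable π)
    (hint : Integrable (fun x : ℝ => x) (μ.map π + ν.map π))
    (h : ∀ A, MeasurableSet A → (μ.map π).real A = ∫ x in A, x ∂(μ.map π + ν.map π)) :
    (fun ω => π ω.1) =ᵐ[taggedSum μ ν]
      (taggedSum μ ν)[tagIndicator | MeasurableSpace.comap (fun ω => π ω.1) (borel ℝ)] := by
  have hW : Measurable fun ω : α × Bool => π ω.1 := hπ.comp measurable_fst
  have hmap : (taggedSum μ ν).map (fun ω => π ω.1) = μ.map π + ν.map π := by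
    rw [← Measure.map_add _ _ hπ, ← map_fst_taggedSum μ ν, Measure.map_map hπ measurable_fst]
    rfl
  refine ae_eq_condExp_comap_of_setIntegral_eq hW ?_ ?_ fun A hA => ?_
  · rw [← hmap] at hint
    exact (integrable_map_measure hint.aestronglyMeasurable hW.aemeasurable).mp hint
  · exact integrable_tagIndicator μ ν
  · rw [← setIntegral_map (f := fun x : ℝ => x) hA measurable_id.aestronglyMeasurable
      hW.aemeasurable, hmap, ← h A hA,
      setIntegral_tagIndicator_taggedSum μ ν (hW hA), measureReal_def, measureReal_def,
      Measure.map_apply hπ hA]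
    rfl

end TaggedSum

lemma IsCoherent.isProbabilityMeasure {m : Measure (ℝ × ℝ)} (h : IsCoherent m) :
    IsProbabilityMeasure m := by
  obtain ⟨Ω, _, P, _, X, Y, Z, hX, hY, -, -, rfl, -, -⟩ := h
  exact Measure.isProbabilityMeasure_map (hX.prodMk hY).aemeasurable

lemma IsCoherent.integrable_map_fst {m : Measure (ℝ × ℝ)} (h : IsCoherent m) :
    Integrable (fun x : ℝ => x) (m.map Prod.fst) := by
  obtain ⟨Ω, _, P, _, X, Y, Z, hX, hY, -, -, rfl, hXZ, -⟩ := h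
  rw [Measure.map_map measurable_fst (hX.prodMk hY)]
  exact (integrable_map_measure aestronglyMeasurable_id hX.aemeasurable).mpr
    (integrable_condExp.congr hXZ.symm)

lemma IsCoherent.integrable_map_snd {m : Measure (ℝ × ℝ)} (h : IsCoherent m) :
    Integrable (fun y : ℝ => y) (m.map Prod.snd) := by
  obtain ⟨Ω, _, P, _, X, Y, Z, hX, hY, -, -, rfl, -, hYZ⟩ := h
  rw [Measure.map_map measurable_snd (hX.prodMk hY)]
  exact (integrable_map_measure aestronglyMeasurable_id hY.aemeasurable).mpr
    (integrable_condExp.congr hYZ.symm)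

namespace MemR

variable {μ ν μ₁ ν₁ μ₂ ν₂ : Measure (ℝ × ℝ)}

lemma of_map_eq (h : MemR μ₁ ν) (hfst : μ₂.map Prod.fst = μ₁.map Prod.fst)
    (hsnd : μ₂.map Prod.snd = μ₁.map Prod.snd) : MemR μ₂ ν := by
  rw [MemR, hfst, hsnd]
  exact h

lemma map_fst_eq [IsFiniteMeasure μ₁] [IsFiniteMeasure μ₂] (h₁ : MemR μ₁ ν₁) (h₂ : MemR μ₂ ν₂)
    (hsum : μ₁ + ν₁ = μ₂ + ν₂) (hint : Integrable (fun x : ℝ => x) ((μ₁ + ν₁).map Prod.fst)) :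
    μ₁.map Prod.fst = μ₂.map Prod.fst := by
  rw [Measure.map_add _ _ measurable_fst] at hint
  refine eq_of_setIntegral_one_sub_eq ?_ hint (fun A hA => (h₁ A hA).1) (fun A hA => (h₂ A hA).1)
  rw [← Measure.map_add _ _ measurable_fst, ← Measure.map_add _ _ measurable_fst, hsum]

lemma map_snd_eq [IsFiniteMeasure μ₁] [IsFiniteMeasure μ₂] (h₁ : MemR μ₁ ν₁) (h₂ : MemR μ₂ ν₂)
    (hsum : μ₁ + ν₁ = μ₂ + ν₂) (hint : Integrable (fun y : ℝ => y) ((μ₁ + ν₁).map Prod.snd)) :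
    μ₁.map Prod.snd = μ₂.map Prod.snd := by
  rw [Measure.map_add _ _ measurable_snd] at hint
  refine eq_of_setIntegral_one_sub_eq ?_ hint (fun A hA => (h₁ A hA).2) (fun A hA => (h₂ A hA).2)
  rw [← Measure.map_add _ _ measurable_snd, ← Measure.map_add _ _ measurable_snd, hsum]

lemma isCoherent [IsProbabilityMeasure (μ + ν)] (h : MemR μ ν)
    (hfst : Integrable (fun x : ℝ => x) ((μ + ν).map Prod.fst))
    (hsnd : Integrable (fun y : ℝ => y) ((μ + ν).map Prod.snd)) : IsCoherent (μ + ν) := by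
  have : IsFiniteMeasure μ := isFiniteMeasure_of_le (μ + ν) (Measure.le_add_right le_rfl)
  have : IsFiniteMeasure ν := isFiniteMeasure_of_le (μ + ν) (Measure.le_add_left le_rfl)
  have : IsProbabilityMeasure ((taggedSum μ ν).map Prod.fst) := by
    rw [map_fst_taggedSum]; infer_instance
  rw [Measure.map_add _ _ measurable_fst] at hfst
  rw [Measure.map_add _ _ measurable_snd] at hsnd
  refine ⟨(ℝ × ℝ) × Bool, inferInstance, taggedSum μ ν,
    Measure.isProbabilityMeasure_of_map Prod.fst, fun ω => ω.1.1, fun ω => ω.1.2, tagIndicator,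
    measurable_fst.fst, measurable_fst.snd, measurable_tagIndicator, tagIndicator_mem_Icc,
    map_fst_taggedSum μ ν, ?_, ?_⟩
  · exact ae_eq_condExp_tagIndicator μ ν measurable_fst hfst fun A hA =>
      measureReal_eq_setIntegral_of_setIntegral_one_sub_eq hfst (fun A hA => (h A hA).1) hA
  · exact ae_eq_condExp_tagIndicator μ ν measurable_snd hsnd fun A hA =>
      measureReal_eq_setIntegral_of_setIntegral_one_sub_eq hsnd (fun A hA => (h A hA).2) hA

lemma isCoherent_add_swap [IsProbabilityMeasure (μ₁ + ν₁)] (h₁ : MemR μ₁ ν₁) (h₂ : MemR μ₂ ν₂)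
    (hsum : μ₁ + ν₁ = μ₂ + ν₂) (hfst : Integrable (fun x : ℝ => x) ((μ₁ + ν₁).map Prod.fst))
    (hsnd : Integrable (fun y : ℝ => y) ((μ₁ + ν₁).map Prod.snd)) : IsCoherent (μ₂ + ν₁) := by
  have : IsFiniteMeasure μ₁ := isFiniteMeasure_of_le (μ₁ + ν₁) (Measure.le_add_right le_rfl)
  have : IsFiniteMeasure μ₂ := isFiniteMeasure_of_le (μ₁ + ν₁) (hsum ▸ Measure.le_add_right le_rfl)
  have hμfst := h₁.map_fst_eq h₂ hsum hfst
  have hμsnd := h₁.map_snd_eq h₂ hsum hsnd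
  have hmfst : (μ₂ + ν₁).map Prod.fst = (μ₁ + ν₁).map Prod.fst := by
    rw [Measure.map_add _ _ measurable_fst, Measure.map_add _ _ measurable_fst, hμfst]
  have hmsnd : (μ₂ + ν₁).map Prod.snd = (μ₁ + ν₁).map Prod.snd := by
    rw [Measure.map_add _ _ measurable_snd, Measure.map_add _ _ measurable_snd, hμsnd]
  have : IsProbabilityMeasure ((μ₂ + ν₁).map Prod.fst) := by
    rw [hmfst]; exact Measure.isProbabilityMeasure_map measurable_fst.aemeasurable
  have := Measure.isProbabilityMeasure_of_map (μ := μ₂ + ν₁) Prod.fst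
  exact (h₁.of_map_eq hμfst.symm hμsnd.symm).isCoherent (hmfst ▸ hfst) (hmsnd ▸ hsnd)

end MemR

lemma eq_smul_add_smul_of_add_eq {α : Type*} [MeasurableSpace α] {m μ₁ ν₁ μ₂ ν₂ : Measure α}
    (hm₁ : m = μ₁ + ν₁) (hm₂ : m = μ₂ + ν₂) :
    m = ((2⁻¹ : ℝ≥0) : ℝ≥0∞) • (μ₂ + ν₁) + ((1 - 2⁻¹ : ℝ≥0) : ℝ≥0∞) • (μ₁ + ν₂) := by
  have hsum : μ₂ + ν₁ + (μ₁ + ν₂) = (2 : ℝ≥0∞) • m := by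
    rw [two_smul]; nth_rw 1 [hm₂]; rw [hm₁]; abel
  have hhalf : ((1 - 2⁻¹ : ℝ≥0) : ℝ≥0∞) = 2⁻¹ := by norm_num
  rw [hhalf, ENNReal.coe_inv two_ne_zero, ENNReal.coe_ofNat, ← smul_add, hsum, smul_smul,
    ENNReal.inv_mul_cancel two_ne_zero ENNReal.ofNat_ne_top, one_smul]

theorem stmt13 (m : Measure (ℝ × ℝ)) [IsProbabilityMeasure m]
    (hcoh : IsCoherent m)
    (hext : ∀ (β : NNReal), 0 < β → β < 1 →
      ∀ m₁ m₂ : Measure (ℝ × ℝ), IsProbabilityMeasure m₁ → IsProbabilityMeasure m₂ →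
        IsCoherent m₁ → IsCoherent m₂ →
        m = (β : ENNReal) • m₁ + ((1 - β : NNReal) : ENNReal) • m₂ →
        m₁ = m ∧ m₂ = m) :
    ∀ μ₁ ν₁ μ₂ ν₂ : Measure (ℝ × ℝ),
      MemR μ₁ ν₁ → m = μ₁ + ν₁ → MemR μ₂ ν₂ → m = μ₂ + ν₂ →
      μ₁ = μ₂ ∧ ν₁ = ν₂ := by
  intro μ₁ ν₁ μ₂ ν₂ h₁ hm₁ h₂ hm₂
  have hfst := hcoh.integrable_map_fst
  have hsnd := hcoh.integrable_map_snd
  subst hm₁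
  have : IsFiniteMeasure μ₁ := isFiniteMeasure_of_le (μ₁ + ν₁) (Measure.le_add_right le_rfl)
  have : IsFiniteMeasure ν₁ := isFiniteMeasure_of_le (μ₁ + ν₁) (Measure.le_add_left le_rfl)
  have : IsProbabilityMeasure (μ₂ + ν₂) := hm₂ ▸ inferInstance
  have hc₁ : IsCoherent (μ₂ + ν₁) := h₁.isCoherent_add_swap h₂ hm₂ hfst hsnd
  have hc₂ : IsCoherent (μ₁ + ν₂) := h₂.isCoherent_add_swap h₁ hm₂.symm (hm₂ ▸ hfst) (hm₂ ▸ hsnd)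
  obtain ⟨hμ, hν⟩ := hext 2⁻¹ (by norm_num) (by norm_num) _ _ hc₁.isProbabilityMeasure
    hc₂.isProbabilityMeasure hc₁ hc₂ (eq_smul_add_smul_of_add_eq rfl hm₂)
  exact ⟨(Measure.eq_of_add_right_eq_add_right hμ).symm,
    (Measure.eq_of_add_left_eq_add_left hν).symm⟩
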